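/- Let S = ⟨a_1,…,a_n⟩ ⊆ ℕ be a numerical semigroup given by its minimal set of generators. Then: (1) L_S = ∅ if and only if n ≤ 2; (2) if n = 3, then L_S = ( a_2 (a_3 − a_1) / gcd(a_2 − a_1, a_3 − a_1) ) + S. -/

import Mathlib

/-- The `S`-degree of an exponent vector. -/
def degS {n : ℕ} {G : Type*} [AddCommMonoid G] (a : Fin n → G) (lam : Fin n → ℕ) : G :=
  ∑ i, lam i • a i

/-- The set of elements of `S = ⟨a_1,…,a_n⟩` having at least two different factorizations
of the same length. -/
def LSet {n : ℕ} {G : Type*} [AddCommMonoid G] (a : Fin n → G) : Set G :=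
  {x | ∃ lam nu : Fin n → ℕ, lam ≠ nu ∧ degS a lam = x ∧ degS a nu = x ∧
    ∑ i, lam i = ∑ i, nu i}

/-!
For at most two distinct generators, the length and degree equations together force two
factorizations to coincide. For three generators, subtracting `a₁` times the length equation
from the degree equation leaves `λ₂ d₁ + λ₃ d₂ = ν₂ d₁ + ν₃ d₂` with `dᵢ = aᵢ₊₁ - a₁`. Since
`d₁ / g` and `d₂ / g` are coprime (`g = gcd d₁ d₂`), the middle coordinates of two distinct such
factorizations differ by a nonzero multiple of `d₂ / g`, so one of them is at least `d₂ / g` and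
the element lies in `a₂ (d₂ / g) + S`. Conversely `a₂ (d₂ / g)` also factors as
`((d₂ - d₁) / g) a₁ + (d₁ / g) a₃`, and `L_S + S ⊆ L_S`.
-/

section AddCommMonoid

variable {n : ℕ} {G : Type*} [AddCommMonoid G] (a : Fin n → G)

lemma degS_add (lam mu : Fin n → ℕ) : degS a (lam + mu) = degS a lam + degS a mu := by
  simp only [degS, Pi.add_apply, add_smul, Finset.sum_add_distrib]

lemma degS_single (i : Fin n) (c : ℕ) : degS a (Pi.single i c) = c • a i := by
  simp [degS, Pi.single_apply, ite_smul]

lemma mem_closure_range_iff_exists_degS {y : G} :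
    y ∈ AddSubmonoid.closure (Set.range a) ↔ ∃ mu, degS a mu = y := by
  simp only [AddSubmonoid.mem_closure_range_iff_of_fintype, degS, eq_comm]

lemma add_degS_mem_LSet {x : G} (hx : x ∈ LSet a) (mu : Fin n → ℕ) :
    x + degS a mu ∈ LSet a := by
  obtain ⟨lam, nu, hne, hlam, hnu, hlen⟩ := hx
  refine ⟨lam + mu, nu + mu, fun h => hne (add_right_cancel h), ?_, ?_, ?_⟩
  · rw [degS_add, hlam]
  · rw [degS_add, hnu]
  · simp only [Pi.add_apply, Finset.sum_add_distrib, hlen]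

lemma smul_mem_LSet_of_add_smul_eq {i j k : Fin n} (hij : i ≠ j) (hkj : k ≠ j) {p q r : ℕ}
    (hp : p ≠ 0) (hlen : q + r = p) (h : q • a i + r • a k = p • a j) : p • a j ∈ LSet a := by
  refine ⟨Pi.single i q + Pi.single k r, Pi.single j p, fun heq => hp ?_, ?_, ?_, ?_⟩
  · simpa [hij, hkj] using (congrFun heq j).symm
  · rw [degS_add, degS_single, degS_single, h]
  · rw [degS_single]
  · simp [Finset.sum_add_distrib, hlen]

end AddCommMonoid

lemma degS_eq_sum_mul {n : ℕ} (a lam : Fin n → ℕ) : degS a lam = ∑ i, lam i * a i := by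
  simp only [degS, smul_eq_mul]

lemma exists_eq_add_single_of_le {n : ℕ} {lam : Fin n → ℕ} {i : Fin n} {c : ℕ}
    (h : c ≤ lam i) : ∃ mu : Fin n → ℕ, lam = mu + Pi.single i c := by
  refine ⟨Function.update lam i (lam i - c), funext fun j => ?_⟩
  rcases eq_or_ne j i with rfl | hj
  · simp [h]
  · simp [hj]

lemma LSet_fin_two_eq_empty (a : Fin 2 → ℕ) (ha : a 0 ≠ a 1) : LSet a = ∅ := by
  refine Set.eq_empty_of_forall_notMem fun x ⟨lam, nu, hne, hlam, hnu, hlen⟩ => hne ?_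
  have hdeg := hlam.trans hnu.symm
  rw [degS_eq_sum_mul, degS_eq_sum_mul, Fin.sum_univ_two, Fin.sum_univ_two] at hdeg
  rw [Fin.sum_univ_two, Fin.sum_univ_two] at hlen
  zify at hdeg hlen
  have h : ((lam 0 : ℤ) - nu 0) * ((a 0 : ℤ) - a 1) = 0 := by
    linear_combination hdeg - (a 1 : ℤ) * hlen
  have h0 : lam 0 = nu 0 := by
    rcases mul_eq_zero.mp h with h | h
    · omega
    · exact absurd (by omega) ha
  funext i
  fin_cases i <;> simp only [Fin.zero_eta, Fin.mk_one, Fin.isValue] <;> omega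

lemma LSet_eq_empty_of_le_two {n : ℕ} (a : Fin n → ℕ) (ha : Function.Injective a) (hn : n ≤ 2) :
    LSet a = ∅ := by
  interval_cases n
  · exact Set.eq_empty_of_forall_notMem fun x ⟨lam, nu, hne, _⟩ => hne (Subsingleton.elim _ _)
  · refine Set.eq_empty_of_forall_notMem fun x ⟨lam, nu, hne, _, _, hlen⟩ => hne ?_
    funext i
    simpa [Fin.fin_one_eq_zero i] using hlen
  · exact LSet_fin_two_eq_empty a (ha.ne (by decide))

lemma div_gcd_dvd_of_mul_eq_mul {d₁ d₂ s t : ℕ} (hd₁ : 0 < d₁) (h : s * d₁ = t * d₂) :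
    d₂ / d₁.gcd d₂ ∣ s := by
  have hg : 0 < d₁.gcd d₂ := Nat.gcd_pos_of_pos_left _ hd₁
  have h' : s * (d₁ / d₁.gcd d₂) = t * (d₂ / d₁.gcd d₂) := by
    rw [← Nat.mul_div_assoc _ (Nat.gcd_dvd_left _ _),
      ← Nat.mul_div_assoc _ (Nat.gcd_dvd_right _ _), h]
  exact (Nat.coprime_div_gcd_div_gcd hg).symm.dvd_of_dvd_mul_right ⟨t, by rw [h', mul_comm]⟩

lemma div_gcd_le_of_add_mul_eq {d₁ d₂ l₁ l₂ m₁ m₂ : ℕ} (hd₁ : 0 < d₁)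
    (h : l₁ * d₁ + l₂ * d₂ = m₁ * d₁ + m₂ * d₂) (hlt : m₁ < l₁) : d₂ / d₁.gcd d₂ ≤ l₁ := by
  obtain ⟨s, rfl⟩ : ∃ s, l₁ = m₁ + s := ⟨l₁ - m₁, by omega⟩
  have hs : s * d₁ = (m₂ - l₂) * d₂ := by
    rw [add_mul] at h
    rw [Nat.sub_mul]
    omega
  have := Nat.le_of_dvd (by omega) (div_gcd_dvd_of_mul_eq_mul hd₁ hs)
  omega

lemma div_gcd_mul_eq {x y z : ℕ} (hxy : x ≤ y) (hyz : y ≤ z) :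
    (z - x) / (y - x).gcd (z - x) * y =
      ((z - x) / (y - x).gcd (z - x) - (y - x) / (y - x).gcd (z - x)) * x +
        (y - x) / (y - x).gcd (z - x) * z := by
  set g := (y - x).gcd (z - x)
  have hy : y = x + (y - x) / g * g := by rw [Nat.div_mul_cancel (Nat.gcd_dvd_left _ _)]; omega
  have hz : z = x + (z - x) / g * g := by rw [Nat.div_mul_cancel (Nat.gcd_dvd_right _ _)]; omega
  have hvu : (y - x) / g ≤ (z - x) / g := Nat.div_le_div_right (by omega)
  set v := (y - x) / g
  set u := (z - x) / g
  clear_value u v g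
  obtain ⟨w, rfl⟩ : ∃ w, u = v + w := ⟨u - v, by omega⟩
  rw [hy, hz, Nat.add_sub_cancel_left]
  ring

lemma mul_div_gcd_mem_LSet {n : ℕ} (a : Fin n → ℕ) {i j k : Fin n} (hij : i ≠ j) (hkj : k ≠ j)
    (hlt : a i < a j) (hgt : a j < a k) :
    a j * ((a k - a i) / Nat.gcd (a j - a i) (a k - a i)) ∈ LSet a := by
  have hu : (a k - a i) / Nat.gcd (a j - a i) (a k - a i) ≠ 0 :=
    (Nat.div_pos (Nat.le_of_dvd (by omega) (Nat.gcd_dvd_right _ _))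
      (Nat.gcd_pos_of_pos_right _ (by omega))).ne'
  rw [mul_comm, ← smul_eq_mul]
  refine smul_mem_LSet_of_add_smul_eq a hij hkj hu
    (Nat.sub_add_cancel (Nat.div_le_div_right (Nat.sub_le_sub_right hgt.le _))) ?_
  simp only [smul_eq_mul]
  exact (div_gcd_mul_eq hlt.le hgt.le).symm

lemma div_gcd_le_of_degS_eq (a : Fin 3 → ℕ) (h01 : a 0 < a 1) (h02 : a 0 < a 2)
    {lam nu : Fin 3 → ℕ} (hne : lam ≠ nu) (hdeg : degS a lam = degS a nu)
    (hlen : ∑ i, lam i = ∑ i, nu i) (hle : nu 1 ≤ lam 1) :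
    (a 2 - a 0) / Nat.gcd (a 1 - a 0) (a 2 - a 0) ≤ lam 1 := by
  rw [degS_eq_sum_mul, degS_eq_sum_mul, Fin.sum_univ_three, Fin.sum_univ_three] at hdeg
  rw [Fin.sum_univ_three, Fin.sum_univ_three] at hlen
  have hdiff : lam 1 * (a 1 - a 0) + lam 2 * (a 2 - a 0) =
      nu 1 * (a 1 - a 0) + nu 2 * (a 2 - a 0) := by
    zify [h01.le, h02.le] at hdeg hlen ⊢
    linear_combination hdeg - (a 0 : ℤ) * hlen
  refine div_gcd_le_of_add_mul_eq (by omega) hdiff (hle.lt_of_ne fun h1 => hne ?_)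
  have h2 : lam 2 = nu 2 :=
    Nat.eq_of_mul_eq_mul_right (by omega : 0 < a 2 - a 0) (by rw [← h1] at hdiff; omega)
  funext i
  fin_cases i <;> simp only [Fin.zero_eta, Fin.mk_one, Fin.reduceFinMk, Fin.isValue] <;> omega

lemma LSet_fin_three_eq (a : Fin 3 → ℕ) (h01 : a 0 < a 1) (h12 : a 1 < a 2) :
    LSet a = {x | ∃ y ∈ AddSubmonoid.closure (Set.range a),
      x = a 1 * ((a 2 - a 0) / Nat.gcd (a 1 - a 0) (a 2 - a 0)) + y} := by
  ext x
  constructor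
  · rintro ⟨lam, nu, hne, rfl, hnu, hlen⟩
    obtain ⟨lam', hlam', hle⟩ : ∃ lam', degS a lam' = degS a lam ∧
        (a 2 - a 0) / Nat.gcd (a 1 - a 0) (a 2 - a 0) ≤ lam' 1 := by
      rcases le_total (nu 1) (lam 1) with h | h
      · exact ⟨lam, rfl, div_gcd_le_of_degS_eq a h01 (h01.trans h12) hne hnu.symm hlen h⟩
      · exact ⟨nu, hnu, div_gcd_le_of_degS_eq a h01 (h01.trans h12) hne.symm hnu hlen.symm h⟩
    obtain ⟨mu, rfl⟩ := exists_eq_add_single_of_le hle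
    refine ⟨degS a mu, (mem_closure_range_iff_exists_degS a).2 ⟨mu, rfl⟩, ?_⟩
    rw [← hlam', degS_add, degS_single, smul_eq_mul, add_comm, mul_comm]
  · rintro ⟨y, hy, rfl⟩
    obtain ⟨mu, rfl⟩ := (mem_closure_range_iff_exists_degS a).1 hy
    exact add_degS_mem_LSet a (mul_div_gcd_mem_LSet a (by decide) (by decide) h01 h12) mu

/-- **Corollary.** Let `S = ⟨a_1,…,a_n⟩ ⊆ ℕ` be a numerical semigroup given by its
minimal set of generators `a_1 < ⋯ < a_n`.
(1) `L_S = ∅` iff `n ≤ 2`;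
(2) if `n = 3`, then `L_S = (a_2 (a_3 - a_1) / gcd(a_2 - a_1, a_3 - a_1)) + S`. -/
theorem LSet_numerical_two_three_generators
    {n : ℕ} (a : Fin n → ℕ)
    -- generators are listed increasingly:
    (hmono : StrictMono a) :
    (LSet a = ∅ ↔ n ≤ 2)
    ∧ (∀ h3 : n = 3,
        LSet a = {x | ∃ y ∈ AddSubmonoid.closure (Set.range a),
          x = a ⟨1, by omega⟩ * ((a ⟨2, by omega⟩ - a ⟨0, by omega⟩) /
            Nat.gcd (a ⟨1, by omega⟩ - a ⟨0, by omega⟩) (a ⟨2, by omega⟩ - a ⟨0, by omega⟩))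
            + y}) := by
  refine ⟨⟨fun hempty => ?_, fun hn => LSet_eq_empty_of_le_two a hmono.injective hn⟩, fun h3 => ?_⟩
  · by_contra! hn
    have hmem := mul_div_gcd_mem_LSet a (i := ⟨0, by omega⟩) (j := ⟨1, by omega⟩)
      (k := ⟨2, by omega⟩) (by simp) (by simp) (hmono (by simp)) (hmono (by simp))
    rw [hempty] at hmem
    exact hmem
  · subst h3
    exact LSet_fin_three_eq a (hmono (by decide)) (hmono (by decide))
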